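/- arXiv:2302.02397 — 5 statements merged into one kernel-verified Lean document; each statement's English description precedes it below -/
import Mathlib

section
/- Let γ ∈ (0,1] and b ∈ (0, r^i), and let (C,S) be the solution of the unperturbed system with C(0) = b, S(0) = 0. Set a = γ + (b² − 1)² and S₋(u) = (1 − γ^{−1/2}(a − (u−1)²)^{1/2})^{1/2}. Then (C,S) is periodic, and its minimal period ω is given by ω = 4 ∫₀^b (γ(S₋(c²) − S₋(c²)³))^{−1} dc, the (possibly improper at c = b) integral being finite. -/
/-- `S₋(u) = (1 − γ^{−1/2}(a − (u−1)²)^{1/2})^{1/2}` with `a = γ + (b²−1)²`. -/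
noncomputable def SminusInner (γ b u : ℝ) : ℝ :=
  Real.sqrt (1 - (Real.sqrt γ)⁻¹ * Real.sqrt ((γ + (b ^ 2 - 1) ^ 2) - (u - 1) ^ 2))

/-!
The energy `(C² - 1)² + γ (S² - 1)²` is conserved, and for `b < rⁱ` its level `a` exceeds both
`1` and `γ`, which keeps the orbit inside the open unit square. There `C` decreases while `S > 0`
and `S` increases while `C > 0`; since `γ (1 - S²) ≥ a - 1`, `C` reaches `0` at a first time `T`.
The system is reversible under `(C, S)(t) ↦ (C, -S)(-t)` and `(C, S)(t) ↦ (-C, S)(2T - t)`, so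
uniqueness of solutions makes the orbit `4T`-periodic, and `C < b` on `(0, 4T)` shows that `4T` is
minimal. On `[0, T]` the energy identity gives `S = S₋(C²)`, so the substitution `c = C(φ)` turns
`∫₀^b dc / (γ (S₋ - S₋³))`, which is `∫₀^b dc / |C'|`, into `T`.
-/

open Set MeasureTheory

def energy (γ c s : ℝ) : ℝ := (c ^ 2 - 1) ^ 2 + γ * (s ^ 2 - 1) ^ 2

def IsSolution (γ : ℝ) (C S : ℝ → ℝ) : Prop :=
  ∀ φ, HasDerivAt C (γ * (S φ ^ 3 - S φ)) φ ∧ HasDerivAt S (-(C φ ^ 3 - C φ)) φ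

theorem energy_le {γ c s : ℝ} (hγ : 0 ≤ γ) (hc : |c| ≤ 1) (hs : |s| ≤ 1) :
    energy γ c s ≤ (1 - c ^ 2) + γ ∧ energy γ c s ≤ 1 + γ * (1 - s ^ 2) := by
  have hc2 : c ^ 2 ≤ 1 := (sq_le_one_iff_abs_le_one c).2 hc
  have hs2 : s ^ 2 ≤ 1 := (sq_le_one_iff_abs_le_one s).2 hs
  have hcc : (c ^ 2 - 1) ^ 2 ≤ 1 - c ^ 2 := by nlinarith [sq_nonneg c]
  have hss : (s ^ 2 - 1) ^ 2 ≤ 1 - s ^ 2 := by nlinarith [sq_nonneg s]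
  constructor <;> unfold energy <;> nlinarith

theorem lt_one_and_lt_energy_of_lt_sqrt {γ b : ℝ} (hγ : γ ∈ Ioc (0 : ℝ) 1)
    (hb : b ∈ Ioo 0 (√(1 - √(1 - γ)))) :
    b < 1 ∧ 1 < energy γ b 0 ∧ γ < energy γ b 0 := by
  have hb2 : b ^ 2 < 1 - √(1 - γ) := (Real.lt_sqrt hb.1.le).1 hb.2
  have hroot := Real.sq_sqrt (show 0 ≤ 1 - γ by linarith [hγ.2])
  have hb21 : b ^ 2 < 1 := by linarith [Real.sqrt_nonneg (1 - γ)]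
  refine ⟨(sq_lt_one_iff₀ hb.1.le).1 hb21, ?_, ?_⟩ <;> unfold energy
  · nlinarith [Real.sqrt_nonneg (1 - γ)]
  · nlinarith [pow_pos (sub_pos.2 hb21) 2]

theorem SminusInner_sq_eq {γ b c s : ℝ} (hγ : 0 < γ) (hs₀ : 0 ≤ s) (hs₁ : s ^ 2 ≤ 1)
    (hE : energy γ c s = energy γ b 0) : SminusInner γ b (c ^ 2) = s := by
  have hroot : γ + (b ^ 2 - 1) ^ 2 - (c ^ 2 - 1) ^ 2 = (√γ * (1 - s ^ 2)) ^ 2 := by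
    rw [mul_pow, Real.sq_sqrt hγ.le]
    unfold energy at hE
    linear_combination -hE
  unfold SminusInner
  rw [hroot, Real.sqrt_sq (mul_nonneg (Real.sqrt_nonneg γ) (by linarith)),
    inv_mul_cancel_left₀ (Real.sqrt_pos.2 hγ).ne', sub_sub_cancel, Real.sqrt_sq hs₀]

theorem exists_first_zero {f : ℝ → ℝ} (hf : Continuous f) (h₀ : 0 < f 0)
    (hz : ∃ t, 0 ≤ t ∧ f t ≤ 0) : ∃ T, 0 < T ∧ f T = 0 ∧ ∀ t ∈ Ico 0 T, 0 < f t := by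
  set Z := {t | 0 ≤ t ∧ f t ≤ 0}
  have hbdd : BddBelow Z := ⟨0, fun t ht => ht.1⟩
  have hT : sInf Z ∈ Z :=
    ((isClosed_le continuous_const continuous_id).inter (isClosed_le hf continuous_const)).csInf_mem
      hz hbdd
  have hpos : ∀ t ∈ Ico 0 (sInf Z), 0 < f t := fun t ht =>
    not_le.1 fun hle => (csInf_le hbdd ⟨ht.1, hle⟩).not_gt ht.2
  refine ⟨sInf Z, hT.1.lt_of_ne fun h0 => ?_, le_antisymm hT.2 (not_lt.1 fun hneg => ?_), hpos⟩
  · rw [← h0] at hT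
    exact hT.2.not_gt h₀
  · obtain ⟨z, hz, hfz⟩ := intermediate_value_Icc' hT.1 hf.continuousOn ⟨hneg.le, h₀.le⟩
    have hzT : z < sInf Z := hz.2.lt_of_ne fun h => by rw [h] at hfz; exact hneg.ne hfz
    exact (hpos z ⟨hz.1, hzT⟩).ne' hfz

theorem integrableOn_image_and_integral_image_eq_measureReal {f f' g : ℝ → ℝ} {s : Set ℝ}
    (hs : MeasurableSet s) (hvol : volume s ≠ ⊤) (hf' : ∀ x ∈ s, HasDerivWithinAt f (f' x) s x)
    (hinj : InjOn f s) (hg : ∀ x ∈ s, |f' x| * g (f x) = 1) :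
    IntegrableOn g (f '' s) ∧ ∫ x in f '' s, g x = volume.real s := by
  have hone : EqOn (fun x => |f' x| • g (f x)) 1 s := hg
  refine ⟨(integrableOn_image_iff_integrableOn_abs_deriv_smul hs hf' hinj g).2
    ((integrableOn_const hvol).congr_fun hone.symm hs), ?_⟩
  rw [integral_image_eq_integral_abs_deriv_smul hs hf' hinj, setIntegral_congr_fun hs hone]
  simp

namespace IsSolution

variable {γ : ℝ} {C S : ℝ → ℝ}

theorem continuous_C (h : IsSolution γ C S) : Continuous C :=
  continuous_iff_continuousAt.2 fun φ => (h φ).1.continuousAt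

theorem continuous_S (h : IsSolution γ C S) : Continuous S :=
  continuous_iff_continuousAt.2 fun φ => (h φ).2.continuousAt

theorem energy_eq (h : IsSolution γ C S) (φ : ℝ) :
    energy γ (C φ) (S φ) = energy γ (C 0) (S 0) := by
  have hderiv : ∀ t, HasDerivAt (fun t => energy γ (C t) (S t)) 0 t := fun t => by
    have hC : HasDerivAt (fun t => (C t ^ 2 - 1) ^ 2) _ t :=
      (((h t).1.fun_pow 2).sub_const 1).fun_pow 2
    have hS : HasDerivAt (fun t => γ * (S t ^ 2 - 1) ^ 2) _ t :=
      ((((h t).2.fun_pow 2).sub_const 1).fun_pow 2).const_mul γ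
    exact (hC.add hS).congr_deriv (by ring)
  exact is_const_of_deriv_eq_zero (fun t => (hderiv t).differentiableAt)
    (fun t => (hderiv t).deriv) φ 0

theorem neg (h : IsSolution γ C S) : IsSolution γ (fun t => -C t) (fun t => -S t) := fun φ =>
  ⟨(h φ).1.neg.congr_deriv (by ring), (h φ).2.neg.congr_deriv (by ring)⟩

theorem reflect (h : IsSolution γ C S) (c : ℝ) :
    IsSolution γ (fun t => C (c - t)) (fun t => -S (c - t)) := fun φ => by
  have hc : HasDerivAt (fun t => c - t) (-1) φ := by
    simpa using (hasDerivAt_id φ).const_sub c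
  exact ⟨((h (c - φ)).1.comp φ hc).congr_deriv (by ring),
    ((h (c - φ)).2.comp φ hc).neg.congr_deriv (by ring)⟩

theorem unique {C' S' : ℝ → ℝ} (h : IsSolution γ C S) (h' : IsSolution γ C' S')
    (hbox : ∀ t, |C t| ≤ 1 ∧ |S t| ≤ 1) (hbox' : ∀ t, |C' t| ≤ 1 ∧ |S' t| ≤ 1) {t₀ : ℝ}
    (h₀ : C t₀ = C' t₀ ∧ S t₀ = S' t₀) : C = C' ∧ S = S' := by
  set V : ℝ × ℝ → ℝ × ℝ := fun p => (γ * (p.2 ^ 3 - p.2), -(p.1 ^ 3 - p.1))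
  obtain ⟨K, hK⟩ : ∃ K, LipschitzOnWith K V (Metric.closedBall 0 1) :=
    (show ContDiff ℝ 1 V by fun_prop).contDiffOn.exists_lipschitzOnWith one_ne_zero
      (convex_closedBall 0 1) (isCompact_closedBall 0 1)
  have hsol : ∀ {x y : ℝ → ℝ}, IsSolution γ x y → (∀ t, |x t| ≤ 1 ∧ |y t| ≤ 1) →
      ∀ t, HasDerivAt (fun t => (x t, y t)) (V (x t, y t)) t ∧
        (x t, y t) ∈ Metric.closedBall (0 : ℝ × ℝ) 1 := fun hxy hb t =>
    ⟨(hxy t).1.prodMk (hxy t).2, by simpa [Prod.norm_def] using hb t⟩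
  have := ODE_solution_unique_univ (v := fun _ => V) (fun _ => hK) (hsol h hbox) (hsol h' hbox')
    (Prod.ext h₀.1 h₀.2)
  exact ⟨funext fun t => congrArg Prod.fst (congrFun this t),
    funext fun t => congrArg Prod.snd (congrFun this t)⟩

theorem abs_lt_one (h : IsSolution γ C S) (hγ : 0 ≤ γ) (hE₁ : 1 < energy γ (C 0) (S 0))
    (hEγ : γ < energy γ (C 0) (S 0)) (h₀ : |C 0| < 1 ∧ |S 0| < 1) (φ : ℝ) :
    |C φ| < 1 ∧ |S φ| < 1 := by
  have hopen : IsOpen {φ | |C φ| < 1 ∧ |S φ| < 1} :=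
    (isOpen_lt (continuous_abs.comp h.continuous_C) continuous_const).inter
      (isOpen_lt (continuous_abs.comp h.continuous_S) continuous_const)
  -- On the boundary of the unit square the energy is at most `max 1 γ`.
  have hclosed_eq : {φ | |C φ| < 1 ∧ |S φ| < 1} = {φ | |C φ| ≤ 1 ∧ |S φ| ≤ 1} := by
    ext φ
    refine ⟨fun hφ => ⟨hφ.1.le, hφ.2.le⟩, fun ⟨hc, hs⟩ => ?_⟩
    obtain ⟨hle₁, hle₂⟩ := energy_le hγ hc hs
    rw [h.energy_eq φ] at hle₁ hle₂
    have hc2 : 0 ≤ C φ ^ 2 := sq_nonneg _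
    have hs2 : 0 ≤ S φ ^ 2 := sq_nonneg _
    refine ⟨(sq_lt_one_iff_abs_lt_one _).1 ?_, (sq_lt_one_iff_abs_lt_one _).1 ?_⟩ <;> nlinarith
  have hclosed : IsClosed {φ | |C φ| < 1 ∧ |S φ| < 1} := by
    rw [hclosed_eq]
    exact (isClosed_le (continuous_abs.comp h.continuous_C) continuous_const).inter
      (isClosed_le (continuous_abs.comp h.continuous_S) continuous_const)
  exact eq_univ_iff_forall.1 (IsClopen.eq_univ ⟨hclosed, hopen⟩ ⟨0, h₀⟩) φ

theorem even_odd (h : IsSolution γ C S) (hbox : ∀ t, |C t| ≤ 1 ∧ |S t| ≤ 1) (hS₀ : S 0 = 0)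
    (t : ℝ) : C (-t) = C t ∧ S (-t) = -S t := by
  obtain ⟨hC, hS⟩ := (h.reflect 0).unique h (fun t => by simpa using hbox (0 - t)) hbox
    (t₀ := 0) (by simp [hS₀])
  exact ⟨by simpa using congrFun hC t, by simpa [neg_eq_iff_eq_neg] using congrFun hS t⟩

theorem reflect_of_C_eq_zero (h : IsSolution γ C S) (hbox : ∀ t, |C t| ≤ 1 ∧ |S t| ≤ 1) {T : ℝ}
    (hCT : C T = 0) (t : ℝ) :
    C (2 * T - t) = -C t ∧ S (2 * T - t) = S t := by
  obtain ⟨hC, hS⟩ := (h.reflect (2 * T)).neg.unique h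
    (fun t => by simpa using hbox (2 * T - t)) hbox (t₀ := T)
    (by simp [show 2 * T - T = T by ring, hCT])
  exact ⟨by simpa [neg_eq_iff_eq_neg] using congrFun hC t, by simpa using congrFun hS t⟩

theorem add_two_mul (h : IsSolution γ C S) (hbox : ∀ t, |C t| ≤ 1 ∧ |S t| ≤ 1) {T : ℝ}
    (hS₀ : S 0 = 0) (hCT : C T = 0) (t : ℝ) :
    C (t + 2 * T) = -C t ∧ S (t + 2 * T) = -S t := by
  obtain ⟨hC, hS⟩ := h.reflect_of_C_eq_zero hbox hCT (-t)
  obtain ⟨hC', hS'⟩ := h.even_odd hbox hS₀ t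
  rw [sub_neg_eq_add, add_comm] at hC hS
  exact ⟨by rw [hC, hC'], by rw [hS, hS']⟩

theorem add_four_mul (h : IsSolution γ C S) (hbox : ∀ t, |C t| ≤ 1 ∧ |S t| ≤ 1) {T : ℝ}
    (hS₀ : S 0 = 0) (hCT : C T = 0) (t : ℝ) :
    C (t + 4 * T) = C t ∧ S (t + 4 * T) = S t := by
  obtain ⟨hC, hS⟩ := h.add_two_mul hbox hS₀ hCT (t + 2 * T)
  obtain ⟨hC', hS'⟩ := h.add_two_mul hbox hS₀ hCT t
  rw [add_assoc, ← two_mul, ← mul_assoc, show (2 : ℝ) * 2 = 4 by norm_num] at hC hS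
  exact ⟨by rw [hC, hC', neg_neg], by rw [hS, hS', neg_neg]⟩

theorem strictMonoOn_S {D : Set ℝ} (h : IsSolution γ C S) (hD : Convex ℝ D)
    (hbox : ∀ t, |C t| < 1) (hpos : ∀ t ∈ interior D, 0 < C t) : StrictMonoOn S D :=
  strictMonoOn_of_deriv_pos hD h.continuous_S.continuousOn fun t ht => by
    have := (sq_lt_one_iff_abs_lt_one _).2 (hbox t)
    rw [(h t).2.deriv, show -(C t ^ 3 - C t) = C t * (1 - C t ^ 2) by ring]
    exact mul_pos (hpos t ht) (by linarith)

theorem strictAntiOn_C {D : Set ℝ} (h : IsSolution γ C S) (hγ : 0 < γ) (hD : Convex ℝ D)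
    (hbox : ∀ t, |S t| < 1) (hpos : ∀ t ∈ interior D, 0 < S t) : StrictAntiOn C D :=
  strictAntiOn_of_deriv_neg hD h.continuous_C.continuousOn fun t ht => by
    have := (sq_lt_one_iff_abs_lt_one _).2 (hbox t)
    rw [(h t).1.deriv, show γ * (S t ^ 3 - S t) = -(γ * S t * (1 - S t ^ 2)) by ring]
    exact neg_neg_of_pos (mul_pos (mul_pos hγ (hpos t ht)) (by linarith))

theorem exists_C_nonpos (h : IsSolution γ C S) (hγ : 0 < γ) (hbox : ∀ t, |C t| < 1 ∧ |S t| < 1)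
    (hE : 1 < energy γ (C 0) (S 0)) (hS₀ : 0 ≤ S 0) : ∃ t, 0 ≤ t ∧ C t ≤ 0 := by
  by_contra! hpos
  have hmono : StrictMonoOn S (Ici 0) := h.strictMonoOn_S (convex_Ici 0) (fun t => (hbox t).1)
    fun t ht => hpos t (interior_subset ht)
  have hS₁ : 0 < S 1 := hS₀.trans_lt (hmono self_mem_Ici (mem_Ici.2 zero_le_one) zero_lt_one)
  set m := S 1 * (energy γ (C 0) (S 0) - 1)
  have hm : 0 < m := mul_pos hS₁ (by linarith)
  -- `γ (1 - S²)` stays above `E - 1` and `S` stays above `S 1`, so `C` decreases at rate `≥ m`.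
  have hslope : ∀ t ∈ interior (Ici (1 : ℝ)), deriv C t ≤ -m := fun t ht => by
    rw [interior_Ici] at ht
    have hSt : S 1 ≤ S t :=
      hmono.monotoneOn (mem_Ici.2 zero_le_one) (mem_Ici.2 (zero_le_one.trans ht.le)) ht.le
    have hEt := (energy_le hγ.le (hbox t).1.le (hbox t).2.le).2
    rw [h.energy_eq t] at hEt
    rw [(h t).1.deriv]
    nlinarith [mul_le_mul_of_nonneg_right hSt (show 0 ≤ γ * (1 - S t ^ 2) by linarith)]
  have hdrop := (convex_Ici (1 : ℝ)).image_sub_le_mul_sub_of_deriv_le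
    h.continuous_C.continuousOn (fun t _ => (h t).1.differentiableAt.differentiableWithinAt)
    hslope 1 self_mem_Ici (1 + m⁻¹) (by simp [hm.le]) (by simp [hm.le])
  have hC₁ : C 1 < 1 := (le_abs_self _).trans_lt (hbox 1).1
  have := hpos (1 + m⁻¹) (by positivity)
  rw [add_sub_cancel_left, neg_mul, mul_inv_cancel₀ hm.ne'] at hdrop
  linarith

theorem exists_quarter_period (h : IsSolution γ C S) (hγ : 0 < γ)
    (hbox : ∀ t, |C t| < 1 ∧ |S t| < 1) (hE : 1 < energy γ (C 0) (S 0)) (hC₀ : 0 < C 0)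
    (hS₀ : 0 ≤ S 0) :
    ∃ T, 0 < T ∧ C T = 0 ∧ StrictAntiOn C (Icc 0 T) ∧ ∀ t ∈ Ioo 0 T, 0 < S t := by
  obtain ⟨T, hT, hCT, hCpos⟩ :=
    exists_first_zero h.continuous_C hC₀ (h.exists_C_nonpos hγ hbox hE hS₀)
  have hSmono : StrictMonoOn S (Icc 0 T) := h.strictMonoOn_S (convex_Icc 0 T)
    (fun t => (hbox t).1) fun t ht => hCpos t (Ioo_subset_Ico_self (by rwa [interior_Icc] at ht))
  have hSpos : ∀ t ∈ Ioo 0 T, 0 < S t := fun t ht =>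
    hS₀.trans_lt (hSmono (left_mem_Icc.2 hT.le) ⟨ht.1.le, ht.2.le⟩ ht.1)
  exact ⟨T, hT, hCT, h.strictAntiOn_C hγ (convex_Icc 0 T) (fun t => (hbox t).2)
    (fun t ht => hSpos t (by rwa [interior_Icc] at ht)), hSpos⟩

theorem C_lt_C_zero (h : IsSolution γ C S) (hbox : ∀ t, |C t| ≤ 1 ∧ |S t| ≤ 1) {T : ℝ}
    (hS₀ : S 0 = 0) (hCT : C T = 0) (hanti : StrictAntiOn C (Icc 0 T)) {t : ℝ}
    (ht : t ∈ Ioo 0 (4 * T)) : C t < C 0 := by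
  have hT : 0 < T := by linarith [ht.1, ht.2]
  have hlt : ∀ s ∈ Ioc 0 T, C s < C 0 := fun s hs =>
    hanti (left_mem_Icc.2 hT.le) (Ioc_subset_Icc_self hs) hs.1
  have hnonneg : ∀ s ∈ Icc 0 T, 0 ≤ C s := fun s hs =>
    hCT ▸ hanti.antitoneOn hs (right_mem_Icc.2 hT.le) hs.2
  have heven := h.even_odd hbox hS₀
  rcases le_or_gt t T with h₁ | h₁
  · exact hlt t ⟨ht.1, h₁⟩
  -- On `[T, 3T]`, `C t = -C |t - 2T| ≤ 0`; on `[3T, 4T)`, `C t = C (4T - t)`.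
  rcases le_or_gt t (3 * T) with h₃ | h₃
  · have hC : C t = -C |t - 2 * T| := by
      have hshift := (h.add_two_mul hbox hS₀ hCT (t - 2 * T)).1
      rw [sub_add_cancel] at hshift
      rcases abs_choice (t - 2 * T) with e | e <;> rw [e, hshift]
      rw [(heven _).1]
    have := hnonneg |t - 2 * T| ⟨abs_nonneg _, abs_le.2 ⟨by linarith, by linarith⟩⟩
    linarith [hlt T ⟨hT, le_rfl⟩]
  · have h₄ := (h.add_four_mul hbox hS₀ hCT (t - 4 * T)).1
    rw [sub_add_cancel, ← (heven (t - 4 * T)).1, neg_sub] at h₄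
    exact h₄ ▸ hlt _ ⟨by linarith [ht.2], by linarith⟩

theorem four_mul_le_of_periodic (h : IsSolution γ C S) (hbox : ∀ t, |C t| ≤ 1 ∧ |S t| ≤ 1)
    {T ω : ℝ} (hS₀ : S 0 = 0) (hCT : C T = 0) (hanti : StrictAntiOn C (Icc 0 T)) (hω : 0 < ω)
    (hper : ∀ φ, C (φ + ω) = C φ ∧ S (φ + ω) = S φ) : 4 * T ≤ ω := by
  by_contra! hlt
  have := (hper 0).1
  rw [zero_add] at this
  exact (h.C_lt_C_zero hbox hS₀ hCT hanti ⟨hω, hlt⟩).ne this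

theorem integrableOn_and_integral_SminusInner_eq {b T : ℝ} (h : IsSolution γ C S) (hγ : 0 < γ)
    (hbox : ∀ t, |S t| < 1) (hE : ∀ t, energy γ (C t) (S t) = energy γ b 0)
    (hT : 0 < T) (hC₀ : C 0 = b) (hCT : C T = 0) (hanti : StrictAntiOn C (Icc 0 T))
    (hpos : ∀ t ∈ Ioo 0 T, 0 < S t) :
    IntegrableOn (fun c => (γ * (SminusInner γ b (c ^ 2) - SminusInner γ b (c ^ 2) ^ 3))⁻¹)
        (Ioo 0 b) ∧
      ∫ c in Ioo 0 b, (γ * (SminusInner γ b (c ^ 2) - SminusInner γ b (c ^ 2) ^ 3))⁻¹ = T := by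
  have himage : C '' Ioo 0 T = Ioo 0 b := by
    rw [h.continuous_C.continuousOn.image_Ioo_of_strictAntiOn hT.le hanti, hC₀, hCT]
  rw [← himage]
  convert integrableOn_image_and_integral_image_eq_measureReal measurableSet_Ioo
    measure_Ioo_lt_top.ne (fun t _ => (h t).1.hasDerivWithinAt)
    (hanti.injOn.mono Ioo_subset_Icc_self) fun t ht => ?_ using 2
  · simp [hT.le]
  have hS1 := (sq_lt_one_iff_abs_lt_one _).2 (hbox t)
  rw [SminusInner_sq_eq hγ (hpos t ht).le hS1.le (hE t)]
  have hrate : 0 < γ * (S t - S t ^ 3) := by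
    rw [show γ * (S t - S t ^ 3) = γ * S t * (1 - S t ^ 2) by ring]
    exact mul_pos (mul_pos hγ (hpos t ht)) (by linarith)
  rw [show γ * (S t ^ 3 - S t) = -(γ * (S t - S t ^ 3)) by ring, abs_neg, abs_of_pos hrate,
    mul_inv_cancel₀ hrate.ne']

end IsSolution

/-- the solution of the unperturbed system through `(b,0)` with
`b ∈ (0, r^i)` is periodic and its minimal period is
`ω = 4 ∫₀^b (γ(S₋(c²) − S₋(c²)³))⁻¹ dc`, the improper integral being finite. -/
theorem period_formula_class0_inner
    (γ : ℝ) (hγ : γ ∈ Set.Ioc (0 : ℝ) 1)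
    (b : ℝ) (hb : b ∈ Set.Ioo 0 (Real.sqrt (1 - Real.sqrt (1 - γ))))
    (C S : ℝ → ℝ)
    (hC : ∀ φ : ℝ, HasDerivAt C (γ * (S φ ^ 3 - S φ)) φ)
    (hS : ∀ φ : ℝ, HasDerivAt S (-(C φ ^ 3 - C φ)) φ)
    (hC0 : C 0 = b) (hS0 : S 0 = 0) :
    ∃ ω : ℝ, 0 < ω ∧
      (∀ φ : ℝ, C (φ + ω) = C φ ∧ S (φ + ω) = S φ) ∧
      (∀ ω' : ℝ, 0 < ω' → (∀ φ : ℝ, C (φ + ω') = C φ ∧ S (φ + ω') = S φ) → ω ≤ ω') ∧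
      MeasureTheory.IntegrableOn
        (fun c : ℝ => (γ * (SminusInner γ b (c ^ 2) - SminusInner γ b (c ^ 2) ^ 3))⁻¹)
        (Set.Ioo 0 b) ∧
      ω = 4 * ∫ c in Set.Ioo 0 b,
            (γ * (SminusInner γ b (c ^ 2) - SminusInner γ b (c ^ 2) ^ 3))⁻¹ := by
  have hsol : IsSolution γ C S := fun φ => ⟨hC φ, hS φ⟩
  obtain ⟨hb₁, hE₁, hEγ⟩ := lt_one_and_lt_energy_of_lt_sqrt hγ hb
  have hE : ∀ t, energy γ (C t) (S t) = energy γ b 0 := fun t => by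
    rw [hsol.energy_eq, hC0, hS0]
  rw [← hE 0] at hE₁ hEγ
  have hbox := hsol.abs_lt_one hγ.1.le hE₁ hEγ (by simp [hC0, hS0, abs_of_pos hb.1, hb₁])
  have hbox' : ∀ t, |C t| ≤ 1 ∧ |S t| ≤ 1 := fun t => ⟨(hbox t).1.le, (hbox t).2.le⟩
  obtain ⟨T, hT, hCT, hanti, hSpos⟩ :=
    hsol.exists_quarter_period hγ.1 hbox hE₁ (hC0 ▸ hb.1) hS0.ge
  obtain ⟨hint, hval⟩ := hsol.integrableOn_and_integral_SminusInner_eq hγ.1 (fun t => (hbox t).2)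
    hE hT hC0 hCT hanti hSpos
  exact ⟨4 * T, by positivity, hsol.add_four_mul hbox' hS0 hCT,
    fun ω hω hper => hsol.four_mul_le_of_periodic hbox' hS0 hCT hanti hω hper, hint,
    by rw [hval]⟩
end

section
/- Let γ ∈ (0,1], σ > √(1 + γ^{−1/2}), and set r^σ = (1 + (γσ²(σ² − 2))^{1/2})^{1/2}. Let (b,l) be initial data satisfying one of: l = 0 and b ∈ (0, r^i) ∪ (r^e, r^σ); l = 0 and |b| ∈ (1, r^e); l ∈ {−1,1} and |b| ∈ (1, r^s). Let (C,S) be the periodic solution of the unperturbed system with C(0) = b, S(0) = l. Then there exist ϱ > 0 and continuous functions Ĉ, Ŝ : {φ ∈ ℂ : |Im φ| ≤ ϱ} → ℂ, holomorphic on the open strip |Im φ| < ϱ, periodic with the same period as (C,S), coinciding with C and S respectively on ℝ, and such that the supremum over the closed strip of max(|Ĉ(φ)|, |Ŝ(φ)|) is strictly less than σ. -/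
/-!
By conservation of the energy `(C² - 1)² + γ (S² - 1)²` the real orbit stays in the region
`|C|, |S| ≤ M` for some `M < σ`: on the cycles of class 1 and 2 because the energy is below
`γ (σ² - 1)²`, on the class-0 cycles because an orbit of energy above `1` cannot leave the square
`|C|, |S| < 1`. The vector field is polynomial, hence holomorphic on `ℂ²`. Picard iteration with
complex primitives gives, on discs of one radius `δ` centred on the real axis, holomorphic
solutions through the points of the real orbit that stay in the ball of radius `(M + σ) / 2`.
Uniqueness for the ODE along segments makes these local solutions agree on overlaps, with the real
solution on `ℝ`, and with their translates by the period, so they glue to a periodic holomorphic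
extension on the strip `|Im φ| < δ`.
-/

open Set Metric Filter Topology
open scoped NNReal

theorem Complex.dist_ofReal_re (z : ℂ) : dist z z.re = |z.im| := by
  rw [Complex.dist_of_re_eq (by simp), Complex.ofReal_im, Real.dist_eq, sub_zero]

section HolomorphicODE

variable {E : Type*} [NormedAddCommGroup E] [NormedSpace ℂ E]

theorem Differentiable.hasDerivAt_wedgeIntegral [CompleteSpace E] {g : ℂ → E}
    (hg : Differentiable ℂ g) (c z : ℂ) :
    HasDerivAt (fun w => Complex.wedgeIntegral c w g) (g z) z :=
  (hg.differentiableOn (s := ball c (‖z - c‖ + 1))).isConservativeOn.hasDerivAt_wedgeIntegral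
    hg.continuous.continuousOn (mem_ball_iff_norm.2 (lt_add_one _))

theorem norm_sub_le_mul_of_hasDerivAt_ball {g g' : ℂ → E} {x z : ℂ} {δ C : ℝ}
    (hg : ∀ w ∈ ball x δ, HasDerivAt g (g' w) w) (hC : ∀ w ∈ ball x δ, ‖g' w‖ ≤ C)
    (hz : z ∈ ball x δ) : ‖g z - g x‖ ≤ C * δ := by
  have hx : x ∈ ball x δ := mem_ball_self (pos_of_mem_ball hz)
  calc ‖g z - g x‖ ≤ C * ‖z - x‖ :=
        (convex_ball x δ).norm_image_sub_le_of_norm_hasDerivWithin_le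
          (fun w hw => (hg w hw).hasDerivWithinAt) hC hx hz
    _ ≤ C * δ := by
        gcongr
        · exact (norm_nonneg _).trans (hC x hx)
        · exact (mem_ball_iff_norm.1 hz).le

variable {F : E → E} {x : ℂ} {v : E}

theorem hasDerivAt_comp_add_smul {f : ℂ → E} {f' : E} {p w : ℂ} {t : ℝ}
    (hf : HasDerivAt f f' (p + t • w)) :
    HasDerivAt (fun s : ℝ => f (p + s • w)) (w • f') t := by
  simpa [Function.comp_def] using hf.scomp t (((hasDerivAt_id t).smul_const w).const_add p)

theorem eqOn_of_hasDerivAt_of_convex {s : Set E} {L : ℝ≥0} (hF : LipschitzOnWith L F s)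
    {U : Set ℂ} (hU : Convex ℝ U) {f g : ℂ → E}
    (hf : ∀ z ∈ U, HasDerivAt f (F (f z)) z ∧ f z ∈ s)
    (hg : ∀ z ∈ U, HasDerivAt g (F (g z)) z ∧ g z ∈ s) {p : ℂ} (hp : p ∈ U) (hfg : f p = g p) :
    EqOn f g U := by
  intro z hz
  have hseg : ∀ t ∈ Icc (0 : ℝ) 1, p + t • (z - p) ∈ U := fun t ht => hU.add_smul_sub_mem hp hz ht
  have hcurve : ∀ h : ℂ → E, (∀ z ∈ U, HasDerivAt h (F (h z)) z) → ∀ t ∈ Icc (0 : ℝ) 1,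
      HasDerivAt (fun t : ℝ => h (p + t • (z - p))) ((z - p) • F (h (p + t • (z - p)))) t :=
    fun h hh t ht => hasDerivAt_comp_add_smul (hh _ (hseg t ht))
  have hf_curve := hcurve f fun z hz => (hf z hz).1
  have hg_curve := hcurve g fun z hz => (hg z hz).1
  have h_unique := ODE_solution_unique_of_mem_Icc_right (v := fun _ y => (z - p) • F y)
    (s := fun _ => s) (K := ‖z - p‖₊ * L) (f := fun t : ℝ => f (p + t • (z - p)))
    (g := fun t : ℝ => g (p + t • (z - p)))
    (fun _ _ => (lipschitzWith_smul (z - p)).comp_lipschitzOnWith hF)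
    (fun t ht => (hf_curve t ht).continuousAt.continuousWithinAt)
    (fun t ht => (hf_curve t (Ico_subset_Icc_self ht)).hasDerivWithinAt)
    (fun t ht => (hf _ (hseg t (Ico_subset_Icc_self ht))).2)
    (fun t ht => (hg_curve t ht).continuousAt.continuousWithinAt)
    (fun t ht => (hg_curve t (Ico_subset_Icc_self ht)).hasDerivWithinAt)
    (fun t ht => (hg _ (hseg t (Ico_subset_Icc_self ht))).2)
    (by simpa using hfg)
  simpa using h_unique ⟨zero_le_one, le_rfl⟩

theorem eqOn_ofReal_of_hasDerivAt {s : Set E} {L : ℝ≥0} (hF : LipschitzOnWith L F s)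
    {f : ℂ → E} {u : ℝ → E} {t₀ δ : ℝ}
    (hf : ∀ z ∈ ball (t₀ : ℂ) δ, HasDerivAt f (F (f z)) z ∧ f z ∈ s)
    (hu : ∀ t ∈ ball t₀ δ, HasDerivAt u (F (u t)) t ∧ u t ∈ s) (h₀ : f t₀ = u t₀) :
    EqOn (fun t : ℝ => f t) u (ball t₀ δ) := by
  intro t ht
  have hδ : 0 < δ := pos_of_mem_ball ht
  have hf_real : ∀ t ∈ ball t₀ δ, HasDerivAt (fun t : ℝ => f t) (F (f t)) t ∧ f t ∈ s := by
    intro t ht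
    have ht' : (t : ℂ) ∈ ball (t₀ : ℂ) δ := by
      rwa [mem_ball, Complex.dist_of_im_eq (by simp), Complex.ofReal_re, Complex.ofReal_re]
    refine ⟨?_, (hf t ht').2⟩
    simpa [Function.comp_def] using (hf t ht').1.scomp t (Complex.ofRealCLM.hasDerivAt (x := t))
  rw [Real.ball_eq_Ioo] at hf_real hu ht
  exact ODE_solution_unique_of_mem_Ioo (v := fun _ => F) (s := fun _ => s) (fun _ _ => hF)
    ⟨by linarith, by linarith⟩ hf_real hu h₀ ht

theorem differentiableOn_strip_of_eqOn_ball_inter {f : ℝ → ℂ → E} {δ : ℝ}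
    (hf : ∀ t : ℝ, DifferentiableOn ℂ (f t) (ball t δ))
    (hcompat : ∀ t t' : ℝ, EqOn (f t) (f t') (ball t δ ∩ ball t' δ)) :
    DifferentiableOn ℂ (fun z => f z.re z) {z | |z.im| < δ} := by
  intro z hz
  have hz' : z ∈ ball (z.re : ℂ) δ := by rwa [mem_ball, Complex.dist_ofReal_re]
  have heq : (fun w => f w.re w) =ᶠ[𝓝 z] f z.re := by
    filter_upwards [isOpen_ball.mem_nhds hz',
      (isOpen_lt Complex.continuous_im.abs continuous_const).mem_nhds hz] with w hw hw'
    exact hcompat w.re z.re ⟨by rwa [mem_ball, Complex.dist_ofReal_re], hw⟩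
  exact (((hf z.re).differentiableAt (isOpen_ball.mem_nhds hz')).congr_of_eventuallyEq
    heq).differentiableWithinAt

-- `wedgeIntegral x · g` is a primitive of an entire `g` vanishing at `x`, so every iterate is
-- entire.
noncomputable def picardIterate (F : E → E) (x : ℂ) (v : E) : ℕ → ℂ → E
  | 0 => fun _ => v
  | n + 1 => fun z => v + Complex.wedgeIntegral x z (F ∘ picardIterate F x v n)

@[simp]
theorem picardIterate_self (n : ℕ) : picardIterate F x v n x = v := by
  cases n <;> simp [picardIterate, Complex.wedgeIntegral]

section Picard

variable [CompleteSpace E]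

theorem differentiable_picardIterate (hF : Differentiable ℂ F) (n : ℕ) :
    Differentiable ℂ (picardIterate F x v n) := by
  induction n with
  | zero => exact differentiable_const v
  | succ n ih =>
    exact fun z => (((hF.comp ih).hasDerivAt_wedgeIntegral x z).const_add v).differentiableAt

theorem hasDerivAt_picardIterate_succ (hF : Differentiable ℂ F) (n : ℕ) (z : ℂ) :
    HasDerivAt (picardIterate F x v (n + 1)) (F (picardIterate F x v n z)) z :=
  ((hF.comp (differentiable_picardIterate hF n)).hasDerivAt_wedgeIntegral x z).const_add v

theorem picardIterate_mem_closedBall (hF : Differentiable ℂ F) {ε δ K : ℝ} (hε : 0 ≤ ε)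
    (hK : ∀ p ∈ closedBall v ε, ‖F p‖ ≤ K) (hδK : δ * K ≤ ε) (n : ℕ) {z : ℂ}
    (hz : z ∈ ball x δ) : picardIterate F x v n z ∈ closedBall v ε := by
  induction n generalizing z with
  | zero => exact mem_closedBall_self hε
  | succ n ih =>
    have := norm_sub_le_mul_of_hasDerivAt_ball
      (fun w _ => hasDerivAt_picardIterate_succ hF n w) (fun w hw => hK _ (ih hw)) hz
    rw [picardIterate_self] at this
    rw [mem_closedBall_iff_norm]
    linarith

theorem norm_picardIterate_succ_sub_le (hF : Differentiable ℂ F) {ε δ K : ℝ} {L : ℝ≥0}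
    (hε : 0 ≤ ε) (hK : ∀ p ∈ closedBall v ε, ‖F p‖ ≤ K)
    (hL : LipschitzOnWith L F (closedBall v ε)) (hδK : δ * K ≤ ε) (n : ℕ) {z : ℂ}
    (hz : z ∈ ball x δ) :
    ‖picardIterate F x v (n + 1) z - picardIterate F x v n z‖ ≤ ε * (δ * L) ^ n := by
  have hmem := picardIterate_mem_closedBall hF hε hK hδK (x := x)
  induction n generalizing z with
  | zero => simpa [picardIterate, mem_closedBall_iff_norm] using hmem 1 hz
  | succ n ih =>
    have hbound : ∀ w ∈ ball x δ,
        ‖F (picardIterate F x v (n + 1) w) - F (picardIterate F x v n w)‖ ≤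
          L * (ε * (δ * L) ^ n) := fun w hw => by
      rw [← dist_eq_norm]
      refine (hL.dist_le_mul _ (hmem _ hw) _ (hmem _ hw)).trans ?_
      rw [dist_eq_norm]
      gcongr
      exact ih hw
    have := norm_sub_le_mul_of_hasDerivAt_ball (fun w _ =>
      (hasDerivAt_picardIterate_succ hF (n + 1) w).sub (hasDerivAt_picardIterate_succ hF n w))
      hbound hz
    simp only [Pi.sub_apply, picardIterate_self, sub_self, sub_zero] at this
    exact this.trans_eq (by ring)

theorem exists_eq_forall_mem_ball_hasDerivAt (hF : Differentiable ℂ F) {ε δ K : ℝ} {L : ℝ≥0}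
    (hε : 0 ≤ ε) (hδ : 0 < δ) (hK : ∀ p ∈ closedBall v ε, ‖F p‖ ≤ K)
    (hL : LipschitzOnWith L F (closedBall v ε)) (hδK : δ * K ≤ ε) (hδL : δ * L < 1) :
    ∃ f : ℂ → E, f x = v ∧ ∀ z ∈ ball x δ, HasDerivAt f (F (f z)) z ∧ f z ∈ closedBall v ε := by
  set P := picardIterate F x v
  set f : ℂ → E := fun z => v + ∑' n, (P (n + 1) z - P n z)
  have hPf : TendstoUniformlyOn P f atTop (ball x δ) := by
    have hP_eq : P = fun N z => v + ∑ n ∈ Finset.range N, (P (n + 1) z - P n z) := by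
      ext N z
      rw [Finset.sum_range_sub (fun n => P n z)]
      simp [P, picardIterate]
    rw [hP_eq]
    exact (uniformContinuous_const.add uniformContinuous_id).comp_tendstoUniformlyOn
      (tendstoUniformlyOn_tsum_nat
        ((summable_geometric_of_lt_one (by positivity) hδL).mul_left ε)
        fun n _ hz => norm_picardIterate_succ_sub_le hF hε hK hL hδK n hz)
  have hP_diff : ∀ᶠ n in atTop, DifferentiableOn ℂ (P n) (ball x δ) :=
    Eventually.of_forall fun n => (differentiable_picardIterate hF n).differentiableOn
  have hPf_loc := hPf.tendstoLocallyUniformlyOn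
  have hf_diff : DifferentiableOn ℂ f (ball x δ) := hPf_loc.differentiableOn hP_diff isOpen_ball
  refine ⟨f, by simp [f, P], fun z hz => ⟨?_, ?_⟩⟩
  · have h_deriv : Tendsto (fun n => deriv (P (n + 1)) z) atTop (𝓝 (deriv f z)) :=
      ((hPf_loc.deriv hP_diff isOpen_ball).tendsto_at hz).comp (tendsto_add_atTop_nat 1)
    have h_field : Tendsto (fun n => deriv (P (n + 1)) z) atTop (𝓝 (F (f z))) := by
      have hP_deriv (n : ℕ) : deriv (P (n + 1)) z = F (P n z) :=
        (hasDerivAt_picardIterate_succ hF n z).deriv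
      simp_rw [hP_deriv]
      exact (hF.continuous.tendsto _).comp (hPf.tendsto_at hz)
    rw [← tendsto_nhds_unique h_deriv h_field]
    exact (hf_diff.differentiableAt (isOpen_ball.mem_nhds hz)).hasDerivAt
  · exact isClosed_closedBall.mem_of_tendsto (hPf.tendsto_at hz)
      (Eventually.of_forall fun n => picardIterate_mem_closedBall hF hε hK hδK n hz)

end Picard

theorem exists_strip_extension_of_forall_mem_ball {s : Set E} {L : ℝ≥0} (hL : LipschitzOnWith L F s)
    {u : ℝ → E} (hu : ∀ t, HasDerivAt u (F (u t)) t ∧ u t ∈ s) {ω : ℝ}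
    (hω : Function.Periodic u ω) {δ : ℝ} (hδ : 0 < δ) {f : ℝ → ℂ → E}
    (hf_self : ∀ t : ℝ, f t t = u t)
    (hf : ∀ t : ℝ, ∀ z ∈ ball (t : ℂ) δ, HasDerivAt (f t) (F (f t z)) z ∧ f t z ∈ s) :
    ∃ G : ℂ → E, DifferentiableOn ℂ G {z | |z.im| < δ} ∧ (∀ t : ℝ, G t = u t) ∧
      ∀ z : ℂ, |z.im| < δ → G (z + ω) = G z ∧ G z ∈ s := by
  have hf_real (t s : ℝ) (hs : s ∈ ball t δ) : f t s = u s :=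
    eqOn_ofReal_of_hasDerivAt hL (hf t) (fun s _ => hu s) (hf_self t) hs
  have hcompat (t t' : ℝ) : EqOn (f t) (f t') (ball t δ ∩ ball t' δ) := by
    intro z hz
    have htt' : |t - t'| < 2 * δ := by
      rw [← Real.dist_eq, ← Complex.isometry_ofReal.dist_eq]
      linarith [dist_triangle_left (t : ℂ) t' z, mem_ball.1 hz.1, mem_ball.1 hz.2]
    have hmid : (t + t') / 2 ∈ ball t δ ∩ ball t' δ := by
      simp only [mem_inter_iff, mem_ball, Real.dist_eq, abs_sub_lt_iff] at htt' ⊢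
      constructor <;> constructor <;> linarith
    have hmid' : (((t + t') / 2 : ℝ) : ℂ) ∈ ball (t : ℂ) δ ∩ ball (t' : ℂ) δ := by
      simpa only [mem_inter_iff, mem_ball, Complex.isometry_ofReal.dist_eq] using hmid
    refine eqOn_of_hasDerivAt_of_convex hL ((convex_ball _ _).inter (convex_ball _ _))
      (fun w hw => hf t w hw.1) (fun w hw => hf t' w hw.2) hmid' ?_ hz
    rw [hf_real t _ hmid.1, hf_real t' _ hmid.2]
  have hper (t : ℝ) : EqOn (fun z => f (t + ω) (z + ω)) (f t) (ball t δ) := by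
    have hshift : ∀ z ∈ ball (t : ℂ) δ, z + ω ∈ ball ((t + ω : ℝ) : ℂ) δ := fun z hz => by
      rwa [Complex.ofReal_add, mem_ball, dist_add_right]
    refine eqOn_of_hasDerivAt_of_convex hL (convex_ball _ _) (fun z hz => ?_) (hf t)
      (mem_ball_self hδ) ?_
    · exact ⟨(hf _ _ (hshift z hz)).1.comp_add_const z ω, (hf _ _ (hshift z hz)).2⟩
    · simp only [← Complex.ofReal_add, hf_self, hω t]
  have hz_mem {z : ℂ} (hz : |z.im| < δ) : z ∈ ball (z.re : ℂ) δ := by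
    rwa [mem_ball, Complex.dist_ofReal_re]
  refine ⟨fun z => f z.re z, differentiableOn_strip_of_eqOn_ball_inter
    (fun t z hz => (hf t z hz).1.differentiableAt.differentiableWithinAt) hcompat,
    fun t => by simpa using hf_self t,
    fun z hz => ⟨by simpa using hper z.re (hz_mem hz), (hf z.re z (hz_mem hz)).2⟩⟩

theorem exists_strip_extension_of_hasDerivAt [FiniteDimensional ℂ E] (hF : ContDiff ℂ 1 F)
    {u : ℝ → E} (hu : ∀ t, HasDerivAt u (F (u t)) t) {M R : ℝ} (hM : ∀ t, ‖u t‖ ≤ M)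
    (hMR : M < R) {ω : ℝ} (hω : Function.Periodic u ω) :
    ∃ δ > 0, ∃ G : ℂ → E, DifferentiableOn ℂ G {z | |z.im| < δ} ∧ (∀ t : ℝ, G t = u t) ∧
      ∀ z : ℂ, |z.im| < δ → G (z + ω) = G z ∧ ‖G z‖ ≤ R := by
  obtain ⟨L, hL⟩ : ∃ L, LipschitzOnWith L F (closedBall 0 R) :=
    hF.locallyLipschitz.locallyLipschitzOn.exists_lipschitzOnWith_of_compact
      (isCompact_closedBall 0 R)
  obtain ⟨K, hK⟩ :=
    (isCompact_closedBall (0 : E) R).exists_bound_of_continuousOn hF.continuous.continuousOn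
  obtain ⟨δ, ⟨hδK, hδL⟩, hδ⟩ : ∃ δ, (δ * K < R - M ∧ δ * L < 1) ∧ δ ∈ Ioi 0 := by
    have hlim (c : ℝ) : Tendsto (fun δ : ℝ => δ * c) (𝓝[>] 0) (𝓝 0) :=
      ((continuous_id.mul continuous_const).tendsto' 0 0 (zero_mul c)).mono_left
        nhdsWithin_le_nhds
    exact (((hlim K).eventually (gt_mem_nhds (sub_pos.2 hMR))).and
      ((hlim L).eventually (gt_mem_nhds one_pos))).and self_mem_nhdsWithin |>.exists
  have hball (t : ℝ) : closedBall (u t) (R - M) ⊆ closedBall 0 R := fun p hp => by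
    rw [mem_closedBall_iff_norm] at hp
    rw [mem_closedBall_zero_iff]
    linarith [norm_le_norm_add_norm_sub' p (u t), hM t]
  choose f hf_self hf using fun t : ℝ => exists_eq_forall_mem_ball_hasDerivAt (x := t)
    (hF.differentiable one_ne_zero) (sub_nonneg.2 hMR.le) hδ (fun p hp => hK p (hball t hp))
    (hL.mono (hball t)) hδK.le hδL
  obtain ⟨G, hG_diff, hG_real, hG⟩ := exists_strip_extension_of_forall_mem_ball hL
    (fun t => ⟨hu t, mem_closedBall_zero_iff.2 ((hM t).trans hMR.le)⟩) hω hδ hf_self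
    fun t z hz => ⟨(hf t z hz).1, hball t (hf t z hz).2⟩
  exact ⟨δ, hδ, G, hG_diff, hG_real,
    fun z hz => ⟨(hG z hz).1, mem_closedBall_zero_iff.1 (hG z hz).2⟩⟩

end HolomorphicODE

section Cycles

def cycleEnergy (γ c s : ℝ) : ℝ := (c ^ 2 - 1) ^ 2 + γ * (s ^ 2 - 1) ^ 2

theorem abs_le_sqrt_one_add_sqrt {x A : ℝ} (h : (x ^ 2 - 1) ^ 2 ≤ A) : |x| ≤ √(1 + √A) := by
  have h' := Real.sqrt_le_sqrt h
  rw [Real.sqrt_sq_eq_abs] at h'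
  rw [← Real.sqrt_sq_eq_abs]
  exact Real.sqrt_le_sqrt (by linarith [le_abs_self (x ^ 2 - 1)])

theorem sq_sub_one_sq_lt {b r : ℝ} (hb : 1 < |b|) (h : |b| < √(1 + √r)) :
    (b ^ 2 - 1) ^ 2 < r := by
  rw [Real.lt_sqrt (abs_nonneg b), sq_abs] at h
  have hb2 : 1 < b ^ 2 := by simpa [sq_abs] using one_lt_pow₀ hb two_ne_zero
  have hr : 0 < √r := by linarith
  calc (b ^ 2 - 1) ^ 2 < √r ^ 2 := by gcongr; linarith
    _ = r := Real.sq_sqrt (Real.sqrt_pos.1 hr).le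

variable {γ : ℝ}

theorem one_lt_and_one_lt_mul_sq_sub_one_sq {σ : ℝ} (hγ : 0 < γ) (hγ1 : γ ≤ 1)
    (hσ : √(1 + (√γ)⁻¹) < σ) : 1 < σ ∧ 1 < γ * (σ ^ 2 - 1) ^ 2 := by
  have hsγ : 0 < √γ := Real.sqrt_pos.2 hγ
  have hinv : 1 ≤ (√γ)⁻¹ := one_le_inv₀ hsγ |>.2 (Real.sqrt_le_one.2 hγ1)
  have hσ0 : 0 < σ := (Real.sqrt_nonneg _).trans_lt hσ
  have hσ2 : 1 + (√γ)⁻¹ < σ ^ 2 := (Real.sqrt_lt' hσ0).1 hσ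
  have hmul : 1 < (σ ^ 2 - 1) * √γ := by
    have := mul_lt_mul_of_pos_right (show (√γ)⁻¹ < σ ^ 2 - 1 by linarith) hsγ
    rwa [inv_mul_cancel₀ hsγ.ne'] at this
  constructor
  · nlinarith
  · nlinarith [Real.sq_sqrt hγ.le]

theorem sqrt_one_add_sqrt_div_lt {a σ : ℝ} (hγ : 0 < γ) (hσ : 1 < σ)
    (ha : a < γ * (σ ^ 2 - 1) ^ 2) : √(1 + √(a / γ)) < σ := by
  rw [Real.sqrt_lt' (by linarith), ← lt_sub_iff_add_lt', Real.sqrt_lt' (by nlinarith),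
    div_lt_iff₀ hγ]
  linarith

variable {C S : ℝ → ℝ}
  (hC : ∀ φ, HasDerivAt C (γ * (S φ ^ 3 - S φ)) φ) (hS : ∀ φ, HasDerivAt S (-(C φ ^ 3 - C φ)) φ)
include hC hS

theorem cycleEnergy_eq_cycleEnergy_zero (t : ℝ) :
    cycleEnergy γ (C t) (S t) = cycleEnergy γ (C 0) (S 0) := by
  have hE : ∀ φ, HasDerivAt (fun φ => cycleEnergy γ (C φ) (S φ)) 0 φ := by
    intro φ
    refine (((((hC φ).pow 2).sub_const 1).pow 2).add
      (((((hS φ).pow 2).sub_const 1).pow 2).const_mul γ)).congr_deriv ?_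
    simp only [Pi.pow_apply]
    ring
  exact is_const_of_deriv_eq_zero (fun φ => (hE φ).differentiableAt) (fun φ => (hE φ).deriv) t 0

theorem exists_abs_le_lt_of_cycleEnergy_lt {σ : ℝ} (hγ : 0 < γ) (hγ1 : γ ≤ 1) (hσ : 1 < σ)
    (ha : cycleEnergy γ (C 0) (S 0) < γ * (σ ^ 2 - 1) ^ 2) :
    ∃ M < σ, ∀ t, |C t| ≤ M ∧ |S t| ≤ M := by
  have hE := cycleEnergy_eq_cycleEnergy_zero hC hS
  generalize cycleEnergy γ (C 0) (S 0) = a at ha hE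
  refine ⟨√(1 + √(a / γ)), sqrt_one_add_sqrt_div_lt hγ hσ ha, fun t => ?_⟩
  have hEt := hE t
  unfold cycleEnergy at hEt
  constructor <;> apply abs_le_sqrt_one_add_sqrt <;> rw [le_div_iff₀ hγ] <;>
    nlinarith [sq_nonneg (C t ^ 2 - 1), sq_nonneg (S t ^ 2 - 1),
      mul_nonneg (sub_nonneg.2 hγ1) (sq_nonneg (C t ^ 2 - 1))]

/-- Orbits of energy above `1` cannot reach the boundary of the square `|c|, |s| ≤ 1`, where the
energy is at most `1`. -/
theorem abs_lt_one_of_one_lt_cycleEnergy (hγ1 : γ ≤ 1) (h1 : 1 < cycleEnergy γ (C 0) (S 0))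
    (hC0 : |C 0| < 1) (hS0 : |S 0| < 1) (t : ℝ) : |C t| < 1 ∧ |S t| < 1 := by
  set w : ℝ → ℝ := fun t => max (C t ^ 2) (S t ^ 2)
  have hw_cont : Continuous w :=
    (continuous_iff_continuousAt.2 fun t => (hC t).continuousAt).pow 2 |>.max
      ((continuous_iff_continuousAt.2 fun t => (hS t).continuousAt).pow 2)
  have hw0 : w 0 < 1 :=
    max_lt ((sq_lt_one_iff_abs_lt_one _).2 hC0) ((sq_lt_one_iff_abs_lt_one _).2 hS0)
  have hw_ne : ∀ t, w t ≠ 1 := by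
    intro t ht
    have hE := cycleEnergy_eq_cycleEnergy_zero hC hS t
    have hCt : C t ^ 2 ≤ 1 := ht ▸ le_max_left _ _
    have hSt : S t ^ 2 ≤ 1 := ht ▸ le_max_right _ _
    unfold cycleEnergy at hE h1
    rcases max_choice (C t ^ 2) (S t ^ 2) with h | h <;> simp only [w, h] at ht <;> rw [ht] at hE
    · nlinarith [mul_nonneg (sub_nonneg.2 hγ1) (sq_nonneg (S t ^ 2 - 1)),
        mul_nonneg (sq_nonneg (S t)) (sub_nonneg.2 hSt)]
    · nlinarith [mul_nonneg (sq_nonneg (C t)) (sub_nonneg.2 hCt)]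
  have hwt : w t < 1 := by
    by_contra! hge
    obtain ⟨s, hs⟩ := intermediate_value_univ 0 t hw_cont ⟨hw0.le, hge⟩
    exact hw_ne s hs
  exact ⟨(sq_lt_one_iff_abs_lt_one _).1 (lt_of_le_of_lt (le_max_left _ _) hwt),
    (sq_lt_one_iff_abs_lt_one _).1 (lt_of_le_of_lt (le_max_right _ _) hwt)⟩

theorem exists_abs_le_lt_of_cycle {σ l b : ℝ} (hγ : γ ∈ Ioc 0 1) (hσ : √(1 + (√γ)⁻¹) < σ)
    (hinit :
      (l = 0 ∧ b ∈ Ioo 0 (√(1 - √(1 - γ))) ∪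
        Ioo (√(1 + √(1 - γ))) (√(1 + √(γ * σ ^ 2 * (σ ^ 2 - 2))))) ∨
      (l = 0 ∧ |b| ∈ Ioo 1 (√(1 + √(1 - γ)))) ∨ ((l = -1 ∨ l = 1) ∧ |b| ∈ Ioo 1 (√(1 + √γ))))
    (hC0 : C 0 = b) (hS0 : S 0 = l) : ∃ M < σ, ∀ t, |C t| ≤ M ∧ |S t| ≤ M := by
  obtain ⟨hγ0, hγ1⟩ := hγ
  obtain ⟨hσ1, hσγ⟩ := one_lt_and_one_lt_mul_sq_sub_one_sq hγ0 hγ1 hσ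
  have henergy := exists_abs_le_lt_of_cycleEnergy_lt hC hS hγ0 hγ1 hσ1
  rw [hC0, hS0, cycleEnergy] at henergy
  rcases hinit with ⟨rfl, ⟨hb0, hb⟩ | ⟨hb1, hb⟩⟩ | ⟨rfl, hb1, hb⟩ | ⟨hl, hb1, hb⟩
  · have hb2 : b ^ 2 < 1 - √(1 - γ) := by rwa [Real.lt_sqrt hb0.le] at hb
    have h1 : 1 < cycleEnergy γ (C 0) (S 0) := by
      rw [hC0, hS0, cycleEnergy]
      nlinarith [Real.sqrt_nonneg (1 - γ), Real.sq_sqrt (sub_nonneg.2 hγ1)]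
    have hC0' : |C 0| < 1 := by
      rw [hC0, ← sq_lt_one_iff_abs_lt_one]
      linarith [Real.sqrt_nonneg (1 - γ)]
    exact ⟨1, hσ1, fun t => (abs_lt_one_of_one_lt_cycleEnergy hC hS hγ1 h1 hC0'
      (by simp [hS0]) t).imp le_of_lt le_of_lt⟩
  · have hb1' : 1 < b :=
      hb1.trans_le' (Real.one_le_sqrt.2 (by linarith [Real.sqrt_nonneg (1 - γ)]))
    have hb_abs : |b| = b := abs_of_pos (zero_lt_one.trans hb1')
    have := sq_sub_one_sq_lt (hb_abs ▸ hb1') (hb_abs ▸ hb)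
    exact henergy (by nlinarith)
  · have := sq_sub_one_sq_lt hb1 hb
    exact henergy (by nlinarith)
  · have := sq_sub_one_sq_lt hb1 hb
    have hl2 : l ^ 2 = 1 := by rcases hl with rfl | rfl <;> norm_num
    exact henergy (by rw [hl2]; nlinarith)

end Cycles

def cycleField (γ : ℝ) (p : ℂ × ℂ) : ℂ × ℂ := (γ * (p.2 ^ 3 - p.2), -(p.1 ^ 3 - p.1))

theorem contDiff_cycleField (γ : ℝ) : ContDiff ℂ 1 (cycleField γ) := by
  unfold cycleField
  fun_prop

theorem analytic_strip_extension_of_cycles_general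
    (γ σ : ℝ) (hγ : γ ∈ Set.Ioc (0 : ℝ) 1)
    (hσ : Real.sqrt (1 + (Real.sqrt γ)⁻¹) < σ)
    (l b : ℝ)
    (hinit :
      (l = 0 ∧ b ∈ Set.Ioo 0 (Real.sqrt (1 - Real.sqrt (1 - γ))) ∪
        Set.Ioo (Real.sqrt (1 + Real.sqrt (1 - γ)))
          (Real.sqrt (1 + Real.sqrt (γ * σ ^ 2 * (σ ^ 2 - 2))))) ∨
      (l = 0 ∧ |b| ∈ Set.Ioo 1 (Real.sqrt (1 + Real.sqrt (1 - γ)))) ∨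
      ((l = -1 ∨ l = 1) ∧ |b| ∈ Set.Ioo 1 (Real.sqrt (1 + Real.sqrt γ))))
    (C S : ℝ → ℝ) (ω : ℝ)
    (hC : ∀ φ : ℝ, HasDerivAt C (γ * (S φ ^ 3 - S φ)) φ)
    (hS : ∀ φ : ℝ, HasDerivAt S (-(C φ ^ 3 - C φ)) φ)
    (hC0 : C 0 = b) (hS0 : S 0 = l)
    (hper : ∀ φ : ℝ, C (φ + ω) = C φ ∧ S (φ + ω) = S φ) :
    ∃ ϱ : ℝ, 0 < ϱ ∧ ∃ Chat Shat : ℂ → ℂ,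
      ContinuousOn Chat {φ : ℂ | |φ.im| ≤ ϱ} ∧
      ContinuousOn Shat {φ : ℂ | |φ.im| ≤ ϱ} ∧
      DifferentiableOn ℂ Chat {φ : ℂ | |φ.im| < ϱ} ∧
      DifferentiableOn ℂ Shat {φ : ℂ | |φ.im| < ϱ} ∧
      (∀ φ : ℂ, |φ.im| ≤ ϱ → Chat (φ + (ω : ℂ)) = Chat φ ∧ Shat (φ + (ω : ℂ)) = Shat φ) ∧
      (∀ x : ℝ, Chat (x : ℂ) = ((C x : ℝ) : ℂ) ∧ Shat (x : ℂ) = ((S x : ℝ) : ℂ)) ∧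
      ∃ M : ℝ, M < σ ∧ ∀ φ : ℂ, |φ.im| ≤ ϱ →
        max ‖Chat φ‖ ‖Shat φ‖ ≤ M := by
  obtain ⟨M, hMσ, hM⟩ := exists_abs_le_lt_of_cycle hC hS hγ hσ hinit hC0 hS0
  set u : ℝ → ℂ × ℂ := fun t => (C t, S t)
  have hu (t : ℝ) : HasDerivAt u (cycleField γ (u t)) t := by
    refine ((hC t).ofReal_comp.prodMk (hS t).ofReal_comp).congr_deriv ?_
    simp [u, cycleField]
  obtain ⟨δ, hδ, G, hG_diff, hG_real, hG⟩ :=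
    exists_strip_extension_of_hasDerivAt (contDiff_cycleField γ) hu (R := (M + σ) / 2)
      (fun t => by simpa [u, Prod.norm_def] using hM t) (by linarith) (ω := ω)
      (fun t => by simp [u, (hper t).1, (hper t).2])
  have hstrip : {φ : ℂ | |φ.im| ≤ δ / 2} ⊆ {φ | |φ.im| < δ} :=
    fun φ (hφ : |φ.im| ≤ δ / 2) => show |φ.im| < δ by linarith
  refine ⟨δ / 2, half_pos hδ, fun φ => (G φ).1, fun φ => (G φ).2, ?_, ?_, ?_, ?_,
    fun φ hφ => by simp [(hG φ (hstrip hφ)).1], fun x => by simp [hG_real x, u],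
    (M + σ) / 2, by linarith, fun φ hφ => (hG φ (hstrip hφ)).2⟩
  · exact (hG_diff.continuousOn.mono hstrip).fst
  · exact (hG_diff.continuousOn.mono hstrip).snd
  · exact hG_diff.fst.mono fun φ hφ => hstrip (le_of_lt (show |φ.im| < δ / 2 from hφ))
  · exact hG_diff.snd.mono fun φ hφ => hstrip (le_of_lt (show |φ.im| < δ / 2 from hφ))

/-- the periodic solution parametrizing a cycle of the unperturbed
system extends holomorphically to a strip `|Im φ| ≤ ϱ`, with the same period,
and with supremum over the closed strip of `max(|Ĉ|,|Ŝ|)` strictly below `σ`. -/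
theorem analytic_strip_extension_of_cycles
    (γ σ : ℝ) (hγ : γ ∈ Set.Ioc (0 : ℝ) 1)
    (hσ : Real.sqrt (1 + (Real.sqrt γ)⁻¹) < σ)
    (l b : ℝ)
    (hinit :
      (l = 0 ∧ b ∈ Set.Ioo 0 (Real.sqrt (1 - Real.sqrt (1 - γ))) ∪
        Set.Ioo (Real.sqrt (1 + Real.sqrt (1 - γ)))
          (Real.sqrt (1 + Real.sqrt (γ * σ ^ 2 * (σ ^ 2 - 2))))) ∨
      (l = 0 ∧ |b| ∈ Set.Ioo 1 (Real.sqrt (1 + Real.sqrt (1 - γ)))) ∨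
      ((l = -1 ∨ l = 1) ∧ |b| ∈ Set.Ioo 1 (Real.sqrt (1 + Real.sqrt γ))))
    (C S : ℝ → ℝ) (ω : ℝ) (hω : 0 < ω)
    (hC : ∀ φ : ℝ, HasDerivAt C (γ * (S φ ^ 3 - S φ)) φ)
    (hS : ∀ φ : ℝ, HasDerivAt S (-(C φ ^ 3 - C φ)) φ)
    (hC0 : C 0 = b) (hS0 : S 0 = l)
    (hper : ∀ φ : ℝ, C (φ + ω) = C φ ∧ S (φ + ω) = S φ) :
    ∃ ϱ : ℝ, 0 < ϱ ∧ ∃ Chat Shat : ℂ → ℂ,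
      ContinuousOn Chat {φ : ℂ | |φ.im| ≤ ϱ} ∧
      ContinuousOn Shat {φ : ℂ | |φ.im| ≤ ϱ} ∧
      DifferentiableOn ℂ Chat {φ : ℂ | |φ.im| < ϱ} ∧
      DifferentiableOn ℂ Shat {φ : ℂ | |φ.im| < ϱ} ∧
      (∀ φ : ℂ, |φ.im| ≤ ϱ → Chat (φ + (ω : ℂ)) = Chat φ ∧ Shat (φ + (ω : ℂ)) = Shat φ) ∧
      (∀ x : ℝ, Chat (x : ℂ) = ((C x : ℝ) : ℂ) ∧ Shat (x : ℂ) = ((S x : ℝ) : ℂ)) ∧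
      ∃ M : ℝ, M < σ ∧ ∀ φ : ℂ, |φ.im| ≤ ϱ →
        max ‖Chat φ‖ ‖Shat φ‖ ≤ M :=
  analytic_strip_extension_of_cycles_general γ σ hγ hσ l b hinit C S ω hC hS hC0 hS0 hper
end

section
/- Let γ ∈ (0,1] and let (C,S) be the solution of the unperturbed system with C(0) = b, S(0) = 0, and set α(φ) = C'(φ)S(φ) − C(φ)S'(φ). If b ∈ (0, r^i) then α(φ) < 0 for all φ ∈ ℝ, and if b ∈ (r^e, ∞) then α(φ) > 0 for all φ ∈ ℝ. -/
/-!
Writing `u = C²`, `v = S²`, the indicator is `α = u² + γv² - (u + γv)` and the energy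
`E = (u - 1)² + γ(v - 1)²` is conserved, so along a zero of `α` both `u + γv` and
`u² + γv²` equal `p = 1 + γ - E`. Since `p² - γ(u² + γv²) = (1 - γ)u² + 2γuv ≥ 0`, this forces
`p ≥ γ` or `p = 0`. On the cycles in question `1 < E`, i.e. `p < γ`, so `α` could only vanish at
the origin; the origin is an equilibrium, hence never reached by uniqueness of solutions.
Therefore `α` has constant sign, which is the sign of `b²(b² - 1)` at `φ = 0`.
-/

open Set

theorem ODE_solution_unique_of_contDiff {E : Type*} [NormedAddCommGroup E] [NormedSpace ℝ E]
    {v : E → E} (hv : ContDiff ℝ 1 v) {f g : ℝ → E}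
    (hf : ∀ t, HasDerivAt f (v (f t)) t) (hg : ∀ t, HasDerivAt g (v (g t)) t)
    {t₀ : ℝ} (heq : f t₀ = g t₀) : f = g := by
  ext t
  obtain ⟨a, b, ht, ht₀⟩ : ∃ a b, t ∈ Ioo a b ∧ t₀ ∈ Ioo a b :=
    ⟨min t t₀ - 1, max t t₀ + 1,
      ⟨by linarith [min_le_left t t₀], by linarith [le_max_left t t₀]⟩,
      ⟨by linarith [min_le_right t t₀], by linarith [le_max_right t t₀]⟩⟩
  have hfc : Continuous f := continuous_iff_continuousAt.2 fun t ↦ (hf t).continuousAt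
  have hgc : Continuous g := continuous_iff_continuousAt.2 fun t ↦ (hg t).continuousAt
  set s := f '' Icc a b ∪ g '' Icc a b
  have hs : IsCompact s := (isCompact_Icc.image hfc).union (isCompact_Icc.image hgc)
  obtain ⟨K, hK⟩ := hv.locallyLipschitz.locallyLipschitzOn.exists_lipschitzOnWith_of_compact hs
  exact ODE_solution_unique_of_mem_Ioo (s := fun _ ↦ s) (fun _ _ ↦ hK) ht₀
    (fun t ht ↦ ⟨hf t, Or.inl ⟨t, Ioo_subset_Icc_self ht, rfl⟩⟩)
    (fun t ht ↦ ⟨hg t, Or.inr ⟨t, Ioo_subset_Icc_self ht, rfl⟩⟩) heq ht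

theorem neg_of_continuous_of_ne_zero {X : Type*} [TopologicalSpace X] [PreconnectedSpace X]
    {f : X → ℝ} (hf : Continuous f) (hne : ∀ x, f x ≠ 0) {x₀ : X} (h₀ : f x₀ < 0) (x : X) :
    f x < 0 := by
  by_contra! hx
  obtain ⟨y, hy⟩ := intermediate_value_univ x₀ x hf ⟨h₀.le, hx⟩
  exact hne y hy

theorem pos_of_continuous_of_ne_zero {X : Type*} [TopologicalSpace X] [PreconnectedSpace X]
    {f : X → ℝ} (hf : Continuous f) (hne : ∀ x, f x ≠ 0) {x₀ : X} (h₀ : 0 < f x₀) (x : X) :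
    0 < f x := by
  simpa using neg_of_continuous_of_ne_zero (f := fun x ↦ -f x) hf.neg (by simpa using hne)
    (x₀ := x₀) (by linarith) x

namespace UnperturbedSystem

def energy (γ x y : ℝ) : ℝ := (x ^ 2 - 1) ^ 2 + γ * (y ^ 2 - 1) ^ 2

def alpha (γ x y : ℝ) : ℝ := γ * (y ^ 4 - y ^ 2) + (x ^ 4 - x ^ 2)

theorem alpha_eq_energy (γ x y : ℝ) :
    alpha γ x y = energy γ x y - (1 + γ) + (x ^ 2 + γ * y ^ 2) := by
  unfold alpha energy; ring

theorem alpha_ne_zero {γ x y : ℝ} (hγ : 0 < γ) (hγ₁ : γ ≤ 1) (hE : 1 < energy γ x y)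
    (hxy : ¬(x = 0 ∧ y = 0)) : alpha γ x y ≠ 0 := by
  intro h0
  have hx := sq_nonneg x
  have hy := mul_nonneg hγ.le (sq_nonneg y)
  set p := x ^ 2 + γ * y ^ 2 with hp
  have hp_eq : p = 1 + γ - energy γ x y := by linarith [alpha_eq_energy γ x y]
  have hquartic : x ^ 4 + γ * y ^ 4 = p := by unfold alpha at h0; linarith
  rcases lt_or_ge 0 p with hp_pos | hp_nonpos
  · have hγp : γ * p ≤ p ^ 2 := by
      nth_rewrite 1 [← hquartic]
      nlinarith [mul_nonneg (sub_nonneg.2 hγ₁) (sq_nonneg (x ^ 2)), mul_nonneg hx hy]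
    have : γ ≤ p := le_of_mul_le_mul_left (by linarith) hp_pos
    linarith
  · have hx0 : x ^ 2 = 0 := by linarith
    have hy0 : y ^ 2 = 0 := (mul_eq_zero.1 (show γ * y ^ 2 = 0 by linarith)).resolve_left hγ.ne'
    exact hxy ⟨pow_eq_zero_iff two_ne_zero |>.1 hx0, pow_eq_zero_iff two_ne_zero |>.1 hy0⟩

theorem one_lt_energy_of_sqrt_lt {γ b : ℝ} (h : √(1 - γ) < |b ^ 2 - 1|) : 1 < energy γ b 0 := by
  have := Real.lt_sq_of_sqrt_lt h
  rw [sq_abs] at this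
  unfold energy; linarith

theorem alpha_zero_right (γ b : ℝ) : alpha γ b 0 = b ^ 2 * (b ^ 2 - 1) := by
  unfold alpha; ring

section Trajectory

variable {γ : ℝ} {C S : ℝ → ℝ}
  (hC : ∀ φ, HasDerivAt C (γ * (S φ ^ 3 - S φ)) φ) (hS : ∀ φ, HasDerivAt S (-(C φ ^ 3 - C φ)) φ)
include hC hS

theorem deriv_mul_sub_mul_deriv (φ : ℝ) :
    deriv C φ * S φ - C φ * deriv S φ = alpha γ (C φ) (S φ) := by
  rw [(hC φ).deriv, (hS φ).deriv]; unfold alpha; ring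

theorem continuous_alpha : Continuous fun φ ↦ alpha γ (C φ) (S φ) := by
  have hCc : Continuous C := continuous_iff_continuousAt.2 fun φ ↦ (hC φ).continuousAt
  have hSc : Continuous S := continuous_iff_continuousAt.2 fun φ ↦ (hS φ).continuousAt
  unfold alpha; fun_prop

theorem energy_eq_energy_zero (φ : ℝ) : energy γ (C φ) (S φ) = energy γ (C 0) (S 0) := by
  have hE : ∀ t, HasDerivAt (fun t ↦ energy γ (C t) (S t)) 0 t := fun t ↦ by
    unfold energy
    refine ((((hC t).fun_pow 2).sub_const 1).fun_pow 2 |>.fun_add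
      ((((hS t).fun_pow 2).sub_const 1).fun_pow 2 |>.const_mul γ)).congr_deriv ?_
    push_cast; ring
  exact is_const_of_deriv_eq_zero (fun t ↦ (hE t).differentiableAt) (fun t ↦ (hE t).deriv) φ 0

theorem not_eq_origin (h₀ : C 0 ≠ 0) (φ : ℝ) : ¬(C φ = 0 ∧ S φ = 0) := by
  rintro ⟨hCφ, hSφ⟩
  let v : ℝ × ℝ → ℝ × ℝ := fun p ↦ (γ * (p.2 ^ 3 - p.2), -(p.1 ^ 3 - p.1))
  have htraj : ∀ t, HasDerivAt (fun t ↦ (C t, S t)) (v (C t, S t)) t :=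
    fun t ↦ (hC t).prodMk (hS t)
  have hrest : ∀ t : ℝ, HasDerivAt (fun _ ↦ (0 : ℝ × ℝ)) (v 0) t :=
    fun t ↦ (hasDerivAt_const t _).congr_deriv (by ext <;> simp [v])
  have := ODE_solution_unique_of_contDiff (v := v) (by fun_prop) htraj hrest (t₀ := φ)
    (by simp [hCφ, hSφ])
  exact h₀ (congrArg Prod.fst (congrFun this 0))

end Trajectory

end UnperturbedSystem

open UnperturbedSystem in
/-- sign of the monotonicity indicator
`α₀₀(φ) = C'(φ)S(φ) − C(φ)S'(φ)` along class-0 cycles: negative on the inner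
cycles (`b ∈ (0, r^i)`) and positive on the outer ones (`b > r^e`). -/
theorem alpha_sign_class_zero
    (γ : ℝ) (hγ : γ ∈ Set.Ioc (0 : ℝ) 1) (b : ℝ)
    (C S : ℝ → ℝ)
    (hC : ∀ φ : ℝ, HasDerivAt C (γ * (S φ ^ 3 - S φ)) φ)
    (hS : ∀ φ : ℝ, HasDerivAt S (-(C φ ^ 3 - C φ)) φ)
    (hC0 : C 0 = b) (hS0 : S 0 = 0) :
    (b ∈ Set.Ioo 0 (Real.sqrt (1 - Real.sqrt (1 - γ))) →
      ∀ φ : ℝ, deriv C φ * S φ - C φ * deriv S φ < 0) ∧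
    (Real.sqrt (1 + Real.sqrt (1 - γ)) < b →
      ∀ φ : ℝ, 0 < deriv C φ * S φ - C φ * deriv S φ) := by
  have hne : b ≠ 0 → √(1 - γ) < |b ^ 2 - 1| → ∀ φ, alpha γ (C φ) (S φ) ≠ 0 :=
    fun hb hsqrt φ ↦ alpha_ne_zero hγ.1 hγ.2
      (by rw [energy_eq_energy_zero hC hS, hC0, hS0]; exact one_lt_energy_of_sqrt_lt hsqrt)
      (not_eq_origin hC hS (hC0 ▸ hb) φ)
  have hα₀ : alpha γ (C 0) (S 0) = b ^ 2 * (b ^ 2 - 1) := by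
    rw [hC0, hS0, alpha_zero_right]
  simp only [deriv_mul_sub_mul_deriv hC hS]
  have hsqrt_nonneg := Real.sqrt_nonneg (1 - γ)
  constructor
  · rintro ⟨hb, hbr⟩
    have hb2 : b ^ 2 < 1 - √(1 - γ) := (Real.lt_sqrt hb.le).1 hbr
    refine neg_of_continuous_of_ne_zero (continuous_alpha hC hS) (hne hb.ne' ?_) (x₀ := 0) ?_
    · rw [abs_of_neg (by linarith)]; linarith
    · rw [hα₀]; exact mul_neg_of_pos_of_neg (by positivity) (by linarith)
  · intro hbr
    have hb : 0 < b := (Real.sqrt_nonneg _).trans_lt hbr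
    have hb2 : 1 + √(1 - γ) < b ^ 2 := (Real.sqrt_lt' hb).1 hbr
    refine pos_of_continuous_of_ne_zero (continuous_alpha hC hS) (hne hb.ne' ?_) (x₀ := 0) ?_
    · rw [abs_of_pos (by linarith)]; linarith
    · rw [hα₀]; exact mul_pos (by positivity) (by linarith)
end

section
/- Let γ ∈ (0,1], let (k,l,b) be admissible initial data, let (C,S) be the corresponding nonconstant periodic solution of the unperturbed system with C(0) = b, S(0) = l and minimal period ω, and assume that α(φ) = C'(φ)(S(φ) − l) − (C(φ) − k)S'(φ) does not vanish on ℝ. Define q(φ) = α(φ)^{−2}((C−k)³(2C+k) + γ(S−l)³(2S+l)), p(φ) = 3γ α(φ)^{−1} C S ((S² − 1)(C − k)² − (C² − 1)(S − l)²), and ξ(φ) = α(φ)^{−1}(α'(φ) q(φ) − p(φ)). Then ∫₀^ω ξ(φ) dφ = 0. -/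
/-!
When `(k, l)` is an equilibrium of the system (`k³ = k`, `l³ = l`, as for all admissible data),
`ξ = -½ (1/α + q)'` along every solution: writing `Q = α² q` and `P = α p`, this reduces to the
polynomial identity `Q' - 2P = α'`, where `'` is the derivative along the vector field.
So `ξ` has a primitive that is a function of the phase point `(C, S)`, and its integral over a
period vanishes.
-/

noncomputable section

namespace CubicSystem

def IsSolution (γ : ℝ) (C S : ℝ → ℝ) : Prop :=
  ∀ φ, HasDerivAt C (γ * (S φ ^ 3 - S φ)) φ ∧ HasDerivAt S (-(C φ ^ 3 - C φ)) φ

def alphaPoly (γ k l c s : ℝ) : ℝ := γ * (s ^ 3 - s) * (s - l) + (c - k) * (c ^ 3 - c)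

/-- `fFlow` is the derivative of `f` along the vector field `(γ (s³ - s), -(c³ - c))`. -/
def alphaPolyFlow (γ k l c s : ℝ) : ℝ :=
  (c ^ 3 - c + (c - k) * (3 * c ^ 2 - 1)) * (γ * (s ^ 3 - s))
    - γ * ((3 * s ^ 2 - 1) * (s - l) + (s ^ 3 - s)) * (c ^ 3 - c)

def qNum (γ k l c s : ℝ) : ℝ := (c - k) ^ 3 * (2 * c + k) + γ * (s - l) ^ 3 * (2 * s + l)

def qNumFlow (γ k l c s : ℝ) : ℝ :=
  (c - k) ^ 2 * (8 * c + k) * (γ * (s ^ 3 - s)) - γ * (s - l) ^ 2 * (8 * s + l) * (c ^ 3 - c)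

def pNum (γ k l c s : ℝ) : ℝ :=
  3 * γ * (c * s * ((s ^ 2 - 1) * (c - k) ^ 2 - (c ^ 2 - 1) * (s - l) ^ 2))

def alpha (k l : ℝ) (C S : ℝ → ℝ) (φ : ℝ) : ℝ := deriv C φ * (S φ - l) - (C φ - k) * deriv S φ

def q (γ k l : ℝ) (C S : ℝ → ℝ) (φ : ℝ) : ℝ := qNum γ k l (C φ) (S φ) / alpha k l C S φ ^ 2

def p (γ k l : ℝ) (C S : ℝ → ℝ) (φ : ℝ) : ℝ := pNum γ k l (C φ) (S φ) / alpha k l C S φ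

def xi (γ k l : ℝ) (C S : ℝ → ℝ) (φ : ℝ) : ℝ :=
  (deriv (alpha k l C S) φ * q γ k l C S φ - p γ k l C S φ) / alpha k l C S φ

variable {γ k l : ℝ} {C S : ℝ → ℝ}

theorem qNumFlow_sub_two_mul_pNum (hk : k ^ 3 = k) (hl : l ^ 3 = l) (c s : ℝ) :
    qNumFlow γ k l c s - 2 * pNum γ k l c s = alphaPolyFlow γ k l c s := by
  unfold qNumFlow pNum alphaPolyFlow
  linear_combination γ * (s ^ 3 - s) * hk - γ * (c ^ 3 - c) * hl

theorem alpha_eq_alphaPoly (h : IsSolution γ C S) :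
    alpha k l C S = fun φ => alphaPoly γ k l (C φ) (S φ) := by
  ext φ
  rw [alpha, (h φ).1.deriv, (h φ).2.deriv, alphaPoly]
  ring

theorem hasDerivAt_alpha (h : IsSolution γ C S) (φ : ℝ) :
    HasDerivAt (alpha k l C S) (alphaPolyFlow γ k l (C φ) (S φ)) φ := by
  rw [alpha_eq_alphaPoly h]
  obtain ⟨hc, hs⟩ := h φ
  refine ((((hs.pow 3).sub hs).const_mul γ).mul (hs.sub_const l)).add
    ((hc.sub_const k).mul ((hc.pow 3).sub hc)) |>.congr_deriv ?_
  simp only [alphaPolyFlow, Pi.pow_apply, Pi.sub_apply]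
  ring

theorem hasDerivAt_qNum (h : IsSolution γ C S) (φ : ℝ) :
    HasDerivAt (fun ψ => qNum γ k l (C ψ) (S ψ)) (qNumFlow γ k l (C φ) (S φ)) φ := by
  obtain ⟨hc, hs⟩ := h φ
  unfold qNum
  refine (((hc.sub_const k).pow 3).mul ((hc.const_mul 2).add_const k)).add
    ((((hs.sub_const l).pow 3).const_mul γ).mul ((hs.const_mul 2).add_const l)) |>.congr_deriv ?_
  simp only [qNumFlow, Pi.pow_apply]
  ring

theorem hasDerivAt_inv_alpha_add_q (h : IsSolution γ C S) (hk : k ^ 3 = k) (hl : l ^ 3 = l)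
    {φ : ℝ} (hα : alpha k l C S φ ≠ 0) :
    HasDerivAt (fun ψ => (alpha k l C S ψ)⁻¹ + q γ k l C S ψ) (-2 * xi γ k l C S φ) φ := by
  have hA : HasDerivAt (alpha k l C S) _ φ := hasDerivAt_alpha h φ
  refine (hA.inv hα).add ((hasDerivAt_qNum h φ).div (hA.pow 2) (pow_ne_zero 2 hα))
    |>.congr_deriv ?_
  unfold xi q p
  rw [hA.deriv]
  simp only [Pi.pow_apply]
  field_simp
  linear_combination alpha k l C S φ ^ 2 * qNumFlow_sub_two_mul_pNum hk hl (C φ) (S φ)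

theorem continuous_xi (h : IsSolution γ C S) (hα : ∀ φ, alpha k l C S φ ≠ 0) :
    Continuous (xi γ k l C S) := by
  have hCc : Continuous C := continuous_iff_continuousAt.2 fun φ => (h φ).1.continuousAt
  have hSc : Continuous S := continuous_iff_continuousAt.2 fun φ => (h φ).2.continuousAt
  have hαc : Continuous (alpha k l C S) := by
    rw [alpha_eq_alphaPoly h]
    unfold alphaPoly
    fun_prop
  have hdα : deriv (alpha k l C S) = fun φ => alphaPolyFlow γ k l (C φ) (S φ) :=
    funext fun φ => (hasDerivAt_alpha h φ).deriv
  unfold xi q p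
  rw [hdα]
  unfold alphaPolyFlow qNum pNum
  fun_prop (disch := exact fun φ => pow_ne_zero _ (hα φ))

theorem integral_xi_eq_zero (h : IsSolution γ C S) (hk : k ^ 3 = k) (hl : l ^ 3 = l)
    (hα : ∀ φ, alpha k l C S φ ≠ 0) {a b : ℝ} (hCab : C a = C b) (hSab : S a = S b) :
    ∫ φ in a..b, xi γ k l C S φ = 0 := by
  have hFTC := intervalIntegral.integral_eq_sub_of_hasDerivAt
    (fun φ _ => hasDerivAt_inv_alpha_add_q h hk hl (hα φ))
    (((continuous_xi h hα).const_mul (-2)).intervalIntegrable a b)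
  have hprim_eq : (alpha k l C S b)⁻¹ + q γ k l C S b = (alpha k l C S a)⁻¹ + q γ k l C S a := by
    simp only [q, alpha_eq_alphaPoly h, hCab, hSab]
  rw [intervalIntegral.integral_const_mul, hprim_eq, sub_self] at hFTC
  simpa using hFTC

end CubicSystem

end

theorem mean_of_xi_vanishes_general
    (γ : ℝ)
    (k l b : ℝ)
    (hadm :
      (k = 0 ∧ l = 0 ∧ b ∈ Set.Ioo 0 (Real.sqrt (1 - Real.sqrt (1 - γ))) ∪
        Set.Ioi (Real.sqrt (1 + Real.sqrt (1 - γ)))) ∨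
      (l = 0 ∧ (k = -1 ∨ k = 1) ∧
        k * b ∈ Set.Ioo 1 (Real.sqrt (1 + Real.sqrt (1 - γ)))) ∨
      ((k = -1 ∨ k = 1) ∧ (l = -1 ∨ l = 1) ∧
        k * b ∈ Set.Ioo 1 (Real.sqrt (1 + Real.sqrt γ))))
    (C S : ℝ → ℝ) (ω : ℝ)
    (hC : ∀ φ : ℝ, HasDerivAt C (γ * (S φ ^ 3 - S φ)) φ)
    (hS : ∀ φ : ℝ, HasDerivAt S (-(C φ ^ 3 - C φ)) φ)
    (hper : ∀ φ : ℝ, C (φ + ω) = C φ ∧ S (φ + ω) = S φ)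
    (α q p ξ : ℝ → ℝ)
    (hα : ∀ φ, α φ = deriv C φ * (S φ - l) - (C φ - k) * deriv S φ)
    (hαne : ∀ φ, α φ ≠ 0)
    (hq : ∀ φ, q φ =
      ((C φ - k) ^ 3 * (2 * C φ + k) + γ * (S φ - l) ^ 3 * (2 * S φ + l)) / α φ ^ 2)
    (hp : ∀ φ, p φ = 3 * γ * (C φ * S φ *
      ((S φ ^ 2 - 1) * (C φ - k) ^ 2 - (C φ ^ 2 - 1) * (S φ - l) ^ 2)) / α φ)
    (hξ : ∀ φ, ξ φ = (deriv α φ * q φ - p φ) / α φ) :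
    ∫ φ in (0:ℝ)..ω, ξ φ = 0 := by
  obtain ⟨hk, hl⟩ : k ^ 3 = k ∧ l ^ 3 = l := by
    obtain ⟨rfl, rfl, -⟩ | ⟨rfl, hk, -⟩ | ⟨hk, hl, -⟩ := hadm
    · norm_num
    · rcases hk with rfl | rfl <;> norm_num
    · rcases hk with rfl | rfl <;> rcases hl with rfl | rfl <;> norm_num
  obtain rfl : α = CubicSystem.alpha k l C S := funext hα
  obtain rfl : q = CubicSystem.q γ k l C S := funext hq
  obtain rfl : p = CubicSystem.p γ k l C S := funext hp
  obtain rfl : ξ = CubicSystem.xi γ k l C S := funext hξ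
  exact CubicSystem.integral_xi_eq_zero (fun φ => ⟨hC φ, hS φ⟩) hk hl hαne
    (by simpa using (hper 0).1.symm) (by simpa using (hper 0).2.symm)

/-- the mean value over the period of
`ξ = α⁻¹(α'q − p)` vanishes, where `α, q, p` are built along a nonconstant
periodic solution parametrizing a cycle with admissible initial data. -/
theorem mean_of_xi_vanishes
    (γ : ℝ) (hγ : γ ∈ Set.Ioc (0 : ℝ) 1)
    (k l b : ℝ)
    (hadm :
      (k = 0 ∧ l = 0 ∧ b ∈ Set.Ioo 0 (Real.sqrt (1 - Real.sqrt (1 - γ))) ∪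
        Set.Ioi (Real.sqrt (1 + Real.sqrt (1 - γ)))) ∨
      (l = 0 ∧ (k = -1 ∨ k = 1) ∧
        k * b ∈ Set.Ioo 1 (Real.sqrt (1 + Real.sqrt (1 - γ)))) ∨
      ((k = -1 ∨ k = 1) ∧ (l = -1 ∨ l = 1) ∧
        k * b ∈ Set.Ioo 1 (Real.sqrt (1 + Real.sqrt γ))))
    (C S : ℝ → ℝ) (ω : ℝ) (hω : 0 < ω)
    (hC : ∀ φ : ℝ, HasDerivAt C (γ * (S φ ^ 3 - S φ)) φ)
    (hS : ∀ φ : ℝ, HasDerivAt S (-(C φ ^ 3 - C φ)) φ)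
    (hC0 : C 0 = b) (hS0 : S 0 = l)
    (hper : ∀ φ : ℝ, C (φ + ω) = C φ ∧ S (φ + ω) = S φ)
    (hmin : ∀ ω' : ℝ, 0 < ω' → (∀ φ : ℝ, C (φ + ω') = C φ ∧ S (φ + ω') = S φ) → ω ≤ ω')
    (hnc : ∃ φ₁ φ₂ : ℝ, (C φ₁, S φ₁) ≠ (C φ₂, S φ₂))
    (α q p ξ : ℝ → ℝ)
    (hα : ∀ φ, α φ = deriv C φ * (S φ - l) - (C φ - k) * deriv S φ)
    (hαne : ∀ φ, α φ ≠ 0)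
    (hq : ∀ φ, q φ =
      ((C φ - k) ^ 3 * (2 * C φ + k) + γ * (S φ - l) ^ 3 * (2 * S φ + l)) / α φ ^ 2)
    (hp : ∀ φ, p φ = 3 * γ * (C φ * S φ *
      ((S φ ^ 2 - 1) * (C φ - k) ^ 2 - (C φ ^ 2 - 1) * (S φ - l) ^ 2)) / α φ)
    (hξ : ∀ φ, ξ φ = (deriv α φ * q φ - p φ) / α φ) :
    ∫ φ in (0:ℝ)..ω, ξ φ = 0 :=
  mean_of_xi_vanishes_general γ k l b hadm C S ω hC hS hper α q p ξ hα hαne hq hp hξ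
end

section
/- Let ω, T, ϑ > 0 and τ ≥ 1 satisfy the Siegel condition |mω + nT| > ϑ(|m| + |n|)^{−τ} for all (m,n) ∈ ℤ² with (m,n) ≠ (0,0). Then for every nonzero integer n, |1 − e^{−2πinT/ω}| > 4ϑω^{−1}((T/ω + 2)|n|)^{−τ}. -/
/-!
Put `x = -nT/ω` and let `m` be the integer nearest to `x`. Since `|1 - e^{2πix}|` only depends
on `x` modulo `1`, Jordan's inequality `|sin t| ≥ 2|t|/π` on `[-π/2, π/2]` gives
`|1 - e^{2πix}| = 2|sin(π(x - m))| ≥ 4|x - m| = 4ω⁻¹|mω + nT|`. The Siegel condition bounds the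
right-hand side below by `4ϑω⁻¹(|m| + |n|)^{-τ}`, and `|m| ≤ |x| + 1/2 ≤ (T/ω + 1)|n|`.
-/

open Real Complex

lemma abs_round_le {α : Type*} [Field α] [LinearOrder α] [IsStrictOrderedRing α] [FloorRing α]
    (x : α) : |(round x : α)| ≤ |x| + 1 / 2 := by
  have h := abs_sub_abs_le_abs_sub (round x : α) x
  rw [abs_sub_comm] at h
  linarith [abs_sub_round x]

lemma abs_round_intCast_mul_add_abs_le (r : ℝ) {n : ℤ} (hn : n ≠ 0) :
    |(round (n * r) : ℝ)| + |(n : ℝ)| ≤ (|r| + 2) * |(n : ℝ)| := by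
  have hn1 : (1 : ℝ) ≤ |(n : ℝ)| := by exact_mod_cast Int.one_le_abs hn
  have hround := abs_round_le ((n : ℝ) * r)
  rw [abs_mul] at hround
  nlinarith

lemma four_mul_abs_le_norm_one_sub_exp {y : ℝ} (hy : |y| ≤ 1 / 2) :
    4 * |y| ≤ ‖1 - exp (2 * π * y * I)‖ := by
  have hjordan : 2 / π * |π * y| ≤ |Real.sin (π * y)| :=
    mul_abs_le_abs_sin (by rw [abs_mul, abs_of_pos pi_pos]; nlinarith [pi_pos])
  rw [abs_mul, abs_of_pos pi_pos, ← mul_assoc, div_mul_cancel₀ _ pi_ne_zero] at hjordan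
  rw [norm_sub_rev, show (2 * π * y * I : ℂ) = I * ((2 * π * y : ℝ) : ℂ) by push_cast; ring,
    norm_exp_I_mul_ofReal_sub_one, norm_mul, show 2 * π * y / 2 = π * y by ring,
    Real.norm_eq_abs, Real.norm_eq_abs, abs_two]
  linarith

lemma four_mul_abs_sub_round_le_norm_one_sub_exp (x : ℝ) :
    4 * |x - round x| ≤ ‖1 - exp (2 * π * x * I)‖ := by
  have hperiodic : exp (2 * π * x * I) = exp (2 * π * ↑(x - round x) * I) := by
    rw [show (2 * π * ↑(x - round x) * I : ℂ) = 2 * π * x * I - round x * (2 * π * I) by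
      push_cast; ring, Complex.exp_sub, exp_int_mul_two_pi_mul_I, div_one]
  rw [hperiodic]
  exact four_mul_abs_le_norm_one_sub_exp (abs_sub_round x)

lemma four_mul_inv_mul_abs_round_mul_add_le_norm_one_sub_exp {ω : ℝ} (hω : 0 < ω) (T : ℝ)
    (n : ℤ) :
    4 * ω⁻¹ * |(round (n * -(T / ω)) : ℝ) * ω + n * T| ≤
      ‖1 - exp (-(2 * π * I * n * T) / ω)‖ := by
  set x : ℝ := n * -(T / ω)
  have hexp : -(2 * π * I * n * T) / ω = 2 * π * x * I := by
    simp only [x]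
    push_cast
    field_simp [show (ω : ℂ) ≠ 0 by exact_mod_cast hω.ne']
  have hresonance : (round x : ℝ) * ω + n * T = -(ω * (x - round x)) := by
    simp only [x]
    field_simp
    ring
  rw [hexp, hresonance, abs_neg, abs_mul, abs_of_pos hω, ← mul_assoc, mul_assoc 4,
    inv_mul_cancel₀ hω.ne', mul_one]
  exact four_mul_abs_sub_round_le_norm_one_sub_exp x

/-- under the Siegel condition on the periods `ω` and `T`, the
small divisor `d_n = 1 − e^{−2πinT/ω}` satisfies
`|d_n| > 4ϑω⁻¹((T/ω + 2)|n|)^{−τ}` for every nonzero integer `n`. -/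
theorem small_divisor_lower_bound
    (ω T ϑ τ : ℝ) (hω : 0 < ω) (hT : 0 < T) (hϑ : 0 < ϑ) (hτ : 1 ≤ τ)
    (hsiegel : ∀ m n : ℤ, ¬(m = 0 ∧ n = 0) →
      ϑ * (((|m| + |n| : ℤ) : ℝ)) ^ (-τ) < |(m : ℝ) * ω + (n : ℝ) * T|) :
    ∀ n : ℤ, n ≠ 0 →
      4 * ϑ * ω⁻¹ * ((T / ω + 2) * ((|n| : ℤ) : ℝ)) ^ (-τ) <
        ‖(1 - Complex.exp (-(2 * Real.pi * Complex.I * (n : ℂ) * (T : ℂ)) / (ω : ℂ)))‖ := by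
  intro n hn
  set m : ℤ := round (n * -(T / ω))
  have hsize : ((|m| + |n| : ℤ) : ℝ) ≤ (T / ω + 2) * ((|n| : ℤ) : ℝ) := by
    have := abs_round_intCast_mul_add_abs_le (-(T / ω)) hn
    rw [abs_neg, abs_of_pos (div_pos hT hω)] at this
    push_cast
    exact this
  have hpos : (0 : ℝ) < ((|m| + |n| : ℤ) : ℝ) := by
    have := Int.one_le_abs hn
    exact_mod_cast (by positivity : 0 < |m| + |n|)
  calc 4 * ϑ * ω⁻¹ * ((T / ω + 2) * ((|n| : ℤ) : ℝ)) ^ (-τ)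
      ≤ 4 * ω⁻¹ * (ϑ * ((|m| + |n| : ℤ) : ℝ) ^ (-τ)) := by
        rw [mul_right_comm 4 ϑ, mul_assoc]
        have := rpow_le_rpow_of_nonpos hpos hsize (by linarith : -τ ≤ 0)
        gcongr
    _ < 4 * ω⁻¹ * |(m : ℝ) * ω + n * T| := by
        gcongr
        exact hsiegel m n (fun h => hn h.2)
    _ ≤ _ := four_mul_inv_mul_abs_round_mul_add_le_norm_one_sub_exp hω T n
end
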